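/- Assume the limits L_j := lim_{ε→0⁺} ∫₀¹ u^{ε − 1 + iω} P_j(u) du exist for j = l−1, l, l+1, where l ≥ 1 is a natural number and ω is real. Then (l+1)·L_{l+1} = (2l+1) · ∫₀¹ u^{iω} P_l(u) du − l · L_{l−1}; that is, the regularized moments I_l(ω) of the Legendre polynomials satisfy the recursion (l+1)·I_{l+1}(ω) = (2l+1)·I_l(ω − i) − l·I_{l−1}(ω), where I_l(ω − i) is the (absolutely convergent) integral ∫₀¹ u^{iω} P_l(u) du. -/

import Mathlib

/-!
Write `Qₙ = Dⁿ (X² - 1)ⁿ`, so that `Pₙ = Qₙ / (2ⁿ n!)`. The identities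
`D (X² - 1)ⁿ⁺¹ = 2(n+1) X (X² - 1)ⁿ` and `X D (X² - 1)ⁿ⁺¹ = 2(n+1) ((X² - 1)ⁿ⁺¹ + (X² - 1)ⁿ)`,
differentiated `n + 1` and `n` times, express `Qₙ₊₂` and `Dⁿ (X² - 1)ⁿ⁺¹` through `X Qₙ₊₁` and
`Qₙ`; eliminating the latter gives Bonnet's recursion `(n+2) Pₙ₊₂ = (2n+3) x Pₙ₊₁ - (n+1) Pₙ`.
Multiplied by `u^(s-1)` and integrated over `(0, 1)`, the factor `x` raises the exponent to `s`,
so for `Re s > 0` the moments obey the recursion exactly. At `s = ε + iω` the outer moments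
converge by hypothesis as `ε → 0⁺`, and the middle one by dominated convergence, since
`|u^(ε+iω)| ≤ 1`.
-/

open MeasureTheory Filter

noncomputable section

/-- The Legendre polynomial of degree `l`, via Rodrigues' formula. -/
def legendre (l : ℕ) (u : ℝ) : ℝ :=
  (1 / (2 ^ l * (Nat.factorial l : ℝ))) *
    iteratedDeriv l (fun x : ℝ => (x ^ 2 - 1) ^ l) u

/-- The regularized integral ∫₀¹ u^{ε−1+iω} P_j(u) du. -/
def regMoment (j : ℕ) (ω ε : ℝ) : ℂ :=
  ∫ u in Set.Ioo (0:ℝ) 1,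
    Complex.exp (((ε : ℂ) - 1 + Complex.I * (ω : ℂ)) * (Real.log u : ℂ)) *
      (legendre j u : ℂ)

open Polynomial Set Topology

section Rodrigues

variable (R : Type*) [CommRing R]

def rodrigues (n : ℕ) : R[X] := derivative^[n] ((X ^ 2 - 1) ^ n)

variable {R}

theorem derivative_X_sq_sub_one_pow_succ (n : ℕ) :
    derivative ((X ^ 2 - 1 : R[X]) ^ (n + 1)) = C (2 * ((n : R) + 1)) * ((X ^ 2 - 1) ^ n * X) := by
  simp only [derivative_pow, derivative_sub, derivative_one, derivative_X, map_mul, map_add,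
    map_natCast, map_one, map_ofNat]
  push_cast
  ring

theorem rodrigues_add_two (m : ℕ) :
    rodrigues R (m + 2) = C (2 * ((m : R) + 2)) *
      (rodrigues R (m + 1) * X + C ((m : R) + 1) * derivative^[m] ((X ^ 2 - 1) ^ (m + 1))) := by
  rw [rodrigues, Function.iterate_succ_apply, derivative_X_sq_sub_one_pow_succ,
    iterate_derivative_C_mul, iterate_derivative_mul_X, rodrigues, nsmul_eq_mul]
  simp only [Nat.add_sub_cancel, map_mul, map_add, map_natCast, map_one, map_ofNat]
  push_cast
  ring

theorem C_add_two_mul_iterate_derivative (m : ℕ) :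
    C ((m : R) + 2) * derivative^[m] ((X ^ 2 - 1 : R[X]) ^ (m + 1)) =
      rodrigues R (m + 1) * X - C (2 * ((m : R) + 1)) * rodrigues R m := by
  have hX : derivative ((X ^ 2 - 1 : R[X]) ^ (m + 1)) * X =
      C (2 * ((m : R) + 1)) * ((X ^ 2 - 1) ^ (m + 1) + (X ^ 2 - 1) ^ m) := by
    rw [derivative_X_sq_sub_one_pow_succ]
    ring
  have h := congrArg (derivative^[m]) hX
  rw [iterate_derivative_derivative_mul_X, iterate_derivative_C_mul, iterate_map_add,
    ← rodrigues, ← rodrigues, nsmul_eq_mul] at h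
  simp only [map_mul, map_add, map_natCast, map_one, map_ofNat] at h ⊢
  linear_combination -h

theorem rodrigues_recurrence (m : ℕ) :
    rodrigues R (m + 2) = C (2 * (2 * (m : R) + 3)) * X * rodrigues R (m + 1) -
      C (4 * ((m : R) + 1) ^ 2) * rodrigues R m := by
  rw [rodrigues_add_two]
  have h := C_add_two_mul_iterate_derivative (R := R) m
  simp only [map_mul, map_add, map_natCast, map_one, map_ofNat, map_pow] at h ⊢
  linear_combination 2 * ((m : R[X]) + 1) * h

end Rodrigues

theorem Polynomial.iteratedDeriv_eval {𝕜 : Type*} [NontriviallyNormedField 𝕜] (p : 𝕜[X])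
    (n : ℕ) :
    iteratedDeriv n (fun x => p.eval x) = fun x => (derivative^[n] p).eval x := by
  induction n generalizing p with
  | zero => simp
  | succ n ih =>
    have hderiv : (_root_.deriv fun x => p.eval x) = fun x => p.derivative.eval x := by
      ext x
      exact p.deriv
    rw [iteratedDeriv_succ', hderiv, ih, Function.iterate_succ_apply]

theorem legendre_eq_eval_rodrigues (l : ℕ) (u : ℝ) :
    legendre l u = (rodrigues ℝ l).eval u / (2 ^ l * l.factorial) := by
  have hpoly : (fun x : ℝ => (x ^ 2 - 1) ^ l) = fun x => ((X ^ 2 - 1) ^ l : ℝ[X]).eval x := by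
    simp
  rw [legendre, hpoly, iteratedDeriv_eval, rodrigues, one_div_mul_eq_div]

theorem continuous_legendre (l : ℕ) : Continuous (legendre l) := by
  simp only [funext (legendre_eq_eval_rodrigues l)]
  fun_prop

theorem legendre_recurrence (m : ℕ) (u : ℝ) :
    ((m : ℝ) + 2) * legendre (m + 2) u =
      (2 * m + 3) * u * legendre (m + 1) u - (m + 1) * legendre m u := by
  have h := congrArg (eval u) (rodrigues_recurrence (R := ℝ) m)
  simp only [eval_mul, eval_sub, eval_C, eval_X] at h
  simp only [legendre_eq_eval_rodrigues, Nat.factorial_succ, pow_succ, h]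
  field_simp
  push_cast
  ring

theorem Complex.exp_mul_ofReal_log (z : ℂ) {u : ℝ} (hu : 0 < u) :
    exp (z * Real.log u) = (u : ℂ) ^ z := by
  rw [cpow_def_of_ne_zero (ofReal_ne_zero.mpr hu.ne'), ofReal_log hu.le, mul_comm]

theorem integrableOn_Ioo_cpow_mul {z : ℂ} (hz : -1 < z.re) {g : ℝ → ℂ}
    (hg : ContinuousOn g (Icc 0 1)) :
    IntegrableOn (fun u : ℝ => (u : ℂ) ^ z * g u) (Ioo 0 1) := by
  have hpow : IntegrableOn (fun u : ℝ => (u : ℂ) ^ z) (Icc 0 1) := by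
    rw [integrableOn_Icc_iff_integrableOn_Ioc]
    simpa using (intervalIntegral.intervalIntegrable_cpow' (a := 0) (b := 1) hz).1
  exact (hpow.mul_continuousOn hg isCompact_Icc).mono_set Ioo_subset_Icc_self

theorem tendsto_setIntegral_cpow_add_mul {s : ℂ} (hs : 0 ≤ s.re) {g : ℝ → ℂ}
    (hg : IntegrableOn g (Ioo 0 1)) :
    Tendsto (fun ε : ℝ => ∫ u in Ioo (0 : ℝ) 1, (u : ℂ) ^ (ε + s) * g u) (𝓝[≥] 0)
      (𝓝 (∫ u in Ioo (0 : ℝ) 1, (u : ℂ) ^ s * g u)) := by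
  refine tendsto_integral_filter_of_dominated_convergence (fun u => ‖g u‖)
    (Eventually.of_forall fun ε =>
      (Complex.measurable_ofReal.pow_const _).aestronglyMeasurable.mul hg.1) ?_ hg.norm ?_
  · filter_upwards [self_mem_nhdsWithin] with ε (hε : 0 ≤ ε)
    refine (ae_restrict_iff' measurableSet_Ioo).mpr (Eventually.of_forall fun u hu => ?_)
    rw [norm_mul, Complex.norm_cpow_eq_rpow_re_of_pos hu.1]
    refine mul_le_of_le_one_left (norm_nonneg _) (Real.rpow_le_one hu.1.le hu.2.le ?_)
    simpa using add_nonneg hε hs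
  · refine (ae_restrict_iff' measurableSet_Ioo).mpr (Eventually.of_forall fun u hu => ?_)
    have hcont : Continuous fun ε : ℝ => (u : ℂ) ^ ((ε : ℂ) + s) * g u :=
      ((Complex.continuous_ofReal.add continuous_const).const_cpow
        (Or.inl (Complex.ofReal_ne_zero.mpr hu.1.ne'))).mul continuous_const
    simpa using (hcont.continuousWithinAt (s := Ici 0) (x := 0)).tendsto

def legendreMoment (j : ℕ) (s : ℂ) : ℂ :=
  ∫ u in Ioo (0 : ℝ) 1, (u : ℂ) ^ s * legendre j u

theorem regMoment_eq_legendreMoment (j : ℕ) (ω ε : ℝ) :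
    regMoment j ω ε = legendreMoment j ((ε + Complex.I * ω) - 1) := by
  refine setIntegral_congr_fun measurableSet_Ioo fun u hu => ?_
  rw [Complex.exp_mul_ofReal_log _ hu.1]
  ring_nf

theorem integrableOn_cpow_mul_legendre (j : ℕ) {s : ℂ} (hs : -1 < s.re) :
    IntegrableOn (fun u : ℝ => (u : ℂ) ^ s * legendre j u) (Ioo 0 1) :=
  integrableOn_Ioo_cpow_mul hs (Complex.continuous_ofReal.comp (continuous_legendre j)).continuousOn

theorem legendreMoment_recurrence (m : ℕ) {s : ℂ} (hs : 0 < s.re) :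
    ((m : ℂ) + 2) * legendreMoment (m + 2) (s - 1) + ((m : ℂ) + 1) * legendreMoment m (s - 1) =
      (2 * m + 3) * legendreMoment (m + 1) s := by
  have hs' : -1 < (s - 1).re := by simp [hs]
  simp only [legendreMoment, ← integral_const_mul]
  rw [← integral_add ((integrableOn_cpow_mul_legendre _ hs').const_mul _)
    ((integrableOn_cpow_mul_legendre _ hs').const_mul _)]
  refine setIntegral_congr_fun measurableSet_Ioo fun u hu => ?_
  have hu : (u : ℂ) ≠ 0 := Complex.ofReal_ne_zero.mpr hu.1.ne'
  have hrec : ((m : ℂ) + 2) * legendre (m + 2) u =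
      (2 * m + 3) * u * legendre (m + 1) u - (m + 1) * legendre m u := by
    exact_mod_cast legendre_recurrence m u
  rw [Complex.cpow_sub _ _ hu, Complex.cpow_one]
  field_simp
  linear_combination (u : ℂ) ^ s * hrec

theorem tendsto_legendreMoment (j : ℕ) {s : ℂ} (hs : 0 ≤ s.re) :
    Tendsto (fun ε : ℝ => legendreMoment j (ε + s)) (𝓝[≥] 0) (𝓝 (legendreMoment j s)) :=
  tendsto_setIntegral_cpow_add_mul hs
    ((Complex.continuous_ofReal.comp (continuous_legendre j)).integrableOn_Icc.mono_set
      Ioo_subset_Icc_self)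

theorem stmt19_general (l : ℕ) (hl : 1 ≤ l) (ω : ℝ) (L : ℕ → ℂ)
    (hm : Tendsto (fun ε : ℝ => regMoment (l - 1) ω ε)
      (nhdsWithin 0 (Set.Ioi 0)) (nhds (L (l - 1))))
    (hp : Tendsto (fun ε : ℝ => regMoment (l + 1) ω ε)
      (nhdsWithin 0 (Set.Ioi 0)) (nhds (L (l + 1)))) :
    ((l : ℂ) + 1) * L (l + 1) =
      (2 * (l : ℂ) + 1) *
          (∫ u in Set.Ioo (0:ℝ) 1,
            Complex.exp ((Complex.I * (ω : ℂ)) * (Real.log u : ℂ)) * (legendre l u : ℂ)) -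
        (l : ℂ) * L (l - 1) := by
  obtain ⟨m, rfl⟩ := Nat.exists_eq_add_of_le' hl
  simp only [Nat.add_sub_cancel] at hm ⊢
  have hmiddle : Tendsto (fun ε : ℝ => legendreMoment (m + 1) (ε + Complex.I * ω)) (𝓝[>] 0)
      (𝓝 (legendreMoment (m + 1) (Complex.I * ω))) :=
    (tendsto_legendreMoment _ (by simp)).mono_left (nhdsWithin_mono _ Ioi_subset_Ici_self)
  have hsplit : ∀ᶠ ε : ℝ in 𝓝[>] 0, ((m : ℂ) + 2) * regMoment (m + 2) ω ε +
      ((m : ℂ) + 1) * regMoment m ω ε =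
        (2 * m + 3) * legendreMoment (m + 1) (ε + Complex.I * ω) := by
    filter_upwards [self_mem_nhdsWithin] with ε (hε : 0 < ε)
    simp only [regMoment_eq_legendreMoment]
    exact legendreMoment_recurrence m (by simpa using hε)
  have hlim := tendsto_nhds_unique (((hp.const_mul _).add (hm.const_mul _)).congr' hsplit)
    (hmiddle.const_mul _)
  have hmoment :
      ∫ u in Ioo (0 : ℝ) 1, Complex.exp (Complex.I * ω * Real.log u) * legendre (m + 1) u =
        legendreMoment (m + 1) (Complex.I * ω) :=
    setIntegral_congr_fun measurableSet_Ioo fun u hu => by rw [Complex.exp_mul_ofReal_log _ hu.1]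
  rw [hmoment]
  push_cast at hlim ⊢
  linear_combination hlim

theorem stmt19 (l : ℕ) (hl : 1 ≤ l) (ω : ℝ) (L : ℕ → ℂ)
    (hm : Tendsto (fun ε : ℝ => regMoment (l - 1) ω ε)
      (nhdsWithin 0 (Set.Ioi 0)) (nhds (L (l - 1))))
    (h0 : Tendsto (fun ε : ℝ => regMoment l ω ε)
      (nhdsWithin 0 (Set.Ioi 0)) (nhds (L l)))
    (hp : Tendsto (fun ε : ℝ => regMoment (l + 1) ω ε)
      (nhdsWithin 0 (Set.Ioi 0)) (nhds (L (l + 1)))) :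
    ((l : ℂ) + 1) * L (l + 1) =
      (2 * (l : ℂ) + 1) *
          (∫ u in Set.Ioo (0:ℝ) 1,
            Complex.exp ((Complex.I * (ω : ℂ)) * (Real.log u : ℂ)) * (legendre l u : ℂ)) -
        (l : ℂ) * L (l - 1) :=
  stmt19_general l hl ω L hm hp
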